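/- arXiv:2004.10844 — 2 statements merged into one kernel-verified Lean document; each statement's English description precedes it below -/
import Mathlib

section
/- Let X : ℝ² → ℝ² be a continuously differentiable vector field with compact support whose divergence vanishes at every point, and let φ : ℝ × ℝ² → ℝ² be a flow of X, i.e. φ(0,q) = q for all q ∈ ℝ², and for all (t,q) the map t ↦ φ(t,q) is differentiable with derivative X(φ(t,q)). Then for every t ∈ ℝ, the time-t map q ↦ φ(t,q) preserves two-dimensional Lebesgue measure. -/
/-!
Over a short time `u` the flow differs by `O(u²)` from the Euler map `q ↦ q + u • X q`, whose
Jacobian determinant is `det (1 + u DX) = 1 + u tr DX + u² det DX = 1 + O(u²)` because `X` is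
divergence free. By the change of variables formula, `∫ g ∘ φ_u ≤ ∫ g + O(u²)` for nonnegative
Lipschitz `g` with compact support, uniformly for the functions `g = f ∘ φ_s`, `0 ≤ s ≤ t`.
Chaining `n` such steps gives `∫ f ∘ φ_t ≤ ∫ f + O(1/n)`, hence `∫ f ∘ φ_t ≤ ∫ f`. Testing
against thickened indicators of compact sets and using inner regularity turns this into
`(φ_t)_* vol ≤ vol` for every `t`, and then `vol = (φ_t)_* (φ_{-t})_* vol ≤ (φ_t)_* vol`.
-/

open MeasureTheory Set Metric Real Filter Topology
open scoped NNReal ENNReal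

structure IsFlow {E : Type*} [NormedAddCommGroup E] [NormedSpace ℝ E] (X : E → E)
    (φ : ℝ → E → E) : Prop where
  zero : ∀ q, φ 0 q = q
  hasDerivAt : ∀ t q, HasDerivAt (fun s => φ s q) (X (φ t q)) t

def IsDivergenceFree {E : Type*} [NormedAddCommGroup E] [NormedSpace ℝ E] (X : E → E) : Prop :=
  ∀ q, LinearMap.trace ℝ E (fderiv ℝ X q) = 0

lemma IsDivergenceFree.neg {E : Type*} [NormedAddCommGroup E] [NormedSpace ℝ E] {X : E → E}
    (hX : IsDivergenceFree X) : IsDivergenceFree (-X) := fun q => by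
  rw [fderiv_neg, ContinuousLinearMap.toLinearMap_neg, map_neg, hX q, neg_zero]

namespace IsFlow

variable {E : Type*} [NormedAddCommGroup E] [NormedSpace ℝ E] {X : E → E} {φ : ℝ → E → E}
  {K : ℝ≥0} {M : ℝ}

lemma continuous_time (hφ : IsFlow X φ) (q : E) : Continuous fun s => φ s q :=
  continuous_iff_continuousAt.2 fun s => (hφ.hasDerivAt s q).continuousAt

lemma neg (hφ : IsFlow X φ) : IsFlow (-X) (fun s => φ (-s)) where
  zero q := by simp [hφ.zero]
  hasDerivAt t q := by
    simpa [Function.comp_def] using (hφ.hasDerivAt (-t) q).scomp t (hasDerivAt_neg t)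

lemma add (hφ : IsFlow X φ) (hK : LipschitzWith K X) (s t : ℝ) (q : E) :
    φ (s + t) q = φ s (φ t q) := by
  have h := ODE_solution_unique_univ (v := fun _ => X) (s := fun _ => univ) (t₀ := 0)
    (f := fun u => φ (u + t) q) (g := fun u => φ u (φ t q)) (fun _ => hK.lipschitzOnWith)
    (fun u => ⟨(hφ.hasDerivAt (u + t) q).comp_add_const u t, trivial⟩)
    (fun u => ⟨hφ.hasDerivAt u _, trivial⟩) (by simp [hφ.zero])
  exact congrFun h s

lemma norm_sub_le (hφ : IsFlow X φ) (hM : ∀ p, ‖X p‖ ≤ M) (t : ℝ) (q : E) :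
    ‖φ t q - q‖ ≤ M * |t| := by
  simpa [hφ.zero, Real.norm_eq_abs] using
    convex_univ.norm_image_sub_le_of_norm_hasDerivWithin_le
      (fun s _ => (hφ.hasDerivAt s q).hasDerivWithinAt) (fun s _ => hM (φ s q))
      (mem_univ 0) (mem_univ t)

lemma mem_cthickening_of_apply_mem (hφ : IsFlow X φ) (hM : ∀ p, ‖X p‖ ≤ M) {t r : ℝ}
    (hMt : M * |t| ≤ r) {S : Set E} {q : E} (hq : φ t q ∈ S) : q ∈ cthickening r S :=
  mem_cthickening_of_dist_le q (φ t q) r S hq <| by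
    rw [dist_comm, dist_eq_norm]
    exact (hφ.norm_sub_le hM t q).trans hMt

lemma dist_le (hφ : IsFlow X φ) (hK : LipschitzWith K X) {t : ℝ} (ht : 0 ≤ t) (p q : E) :
    dist (φ t p) (φ t q) ≤ dist p q * exp (K * t) := by
  simpa [hφ.zero] using dist_le_of_trajectories_ODE (v := fun _ => X) (fun _ => hK)
    (hφ.continuous_time p).continuousOn (fun s _ => (hφ.hasDerivAt s p).hasDerivWithinAt)
    (hφ.continuous_time q).continuousOn (fun s _ => (hφ.hasDerivAt s q).hasDerivWithinAt)
    le_rfl t ⟨ht, le_rfl⟩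

lemma lipschitzWith (hφ : IsFlow X φ) (hK : LipschitzWith K X) {t T : ℝ} (ht : 0 ≤ t)
    (htT : t ≤ T) : LipschitzWith (Real.toNNReal (exp (K * T))) (φ t) :=
  LipschitzWith.of_dist_le_mul fun p q => by
    rw [Real.coe_toNNReal _ (exp_nonneg _), mul_comm]
    exact (hφ.dist_le hK ht p q).trans <| mul_le_mul_of_nonneg_left
      (exp_le_exp.2 (mul_le_mul_of_nonneg_left htT K.coe_nonneg)) dist_nonneg

lemma continuous (hφ : IsFlow X φ) (hK : LipschitzWith K X) (t : ℝ) : Continuous (φ t) := by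
  rcases le_total 0 t with ht | ht
  · exact (hφ.lipschitzWith hK ht le_rfl).continuous
  · simpa using (hφ.neg.lipschitzWith hK.neg (neg_nonneg.2 ht) le_rfl).continuous

lemma norm_sub_add_smul_le (hφ : IsFlow X φ) (hK : LipschitzWith K X) (hM : ∀ p, ‖X p‖ ≤ M)
    {u : ℝ} (hu : 0 ≤ u) (q : E) : ‖φ u q - (q + u • X q)‖ ≤ K * M * u ^ 2 := by
  have hderiv : ∀ s ∈ Icc 0 u, HasDerivWithinAt (fun s => φ s q - (q + s • X q))
      (X (φ s q) - X q) (Icc 0 u) s := fun s _ => by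
    simpa using ((hφ.hasDerivAt s q).fun_sub
      (((hasDerivAt_id s).smul_const (X q)).const_add q)).hasDerivWithinAt
  have hbound : ∀ s ∈ Icc 0 u, ‖X (φ s q) - X q‖ ≤ K * M * u := fun s hs => by
    calc ‖X (φ s q) - X q‖ ≤ K * ‖φ s q - q‖ := by
          simpa [dist_eq_norm] using hK.dist_le_mul (φ s q) q
      _ ≤ K * (M * u) := by
          gcongr
          exact (hφ.norm_sub_le hM s q).trans
            (mul_le_mul_of_nonneg_left (abs_le.2 ⟨by linarith [hs.1], hs.2⟩)
              ((norm_nonneg _).trans (hM q)))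
      _ = K * M * u := by ring
  have := convex_Icc 0 u |>.norm_image_sub_le_of_norm_hasDerivWithin_le hderiv hbound
    (left_mem_Icc.2 hu) (right_mem_Icc.2 hu)
  simpa [hφ.zero, abs_of_nonneg hu, pow_two, mul_assoc] using this

end IsFlow

lemma LinearMap.det_prod_eq {R : Type*} [CommRing R] (A : (R × R) →ₗ[R] R × R) :
    A.det = (A (1, 0)).1 * (A (0, 1)).2 - (A (0, 1)).1 * (A (1, 0)).2 := by
  rw [← LinearMap.det_toMatrix (Module.Basis.finTwoProd R) A, Matrix.det_fin_two]
  simp [LinearMap.toMatrix_apply]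

lemma LinearMap.trace_prod_eq {R : Type*} [CommRing R] (A : (R × R) →ₗ[R] R × R) :
    LinearMap.trace R (R × R) A = (A (1, 0)).1 + (A (0, 1)).2 := by
  rw [LinearMap.trace_eq_matrix_trace R (Module.Basis.finTwoProd R), Matrix.trace_fin_two]
  simp [LinearMap.toMatrix_apply]

lemma DifferentiableAt.trace_fderiv_eq {X : ℝ × ℝ → ℝ × ℝ} {p : ℝ × ℝ}
    (hX : DifferentiableAt ℝ X p) :
    LinearMap.trace ℝ (ℝ × ℝ) (fderiv ℝ X p)
      = deriv (fun y => (X (y, p.2)).1) p.1 + deriv (fun z => (X (p.1, z)).2) p.2 := by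
  have h₁ : HasDerivAt (fun y => (X (y, p.2)).1) (fderiv ℝ X p (1, 0)).1 p.1 := by
    simpa [Function.comp_def] using ((ContinuousLinearMap.fst ℝ ℝ ℝ).hasFDerivAt.comp p.1
      (hX.hasFDerivAt.comp p.1 (hasFDerivAt_prodMk_left p.1 p.2))).hasDerivAt
  have h₂ : HasDerivAt (fun z => (X (p.1, z)).2) (fderiv ℝ X p (0, 1)).2 p.2 := by
    simpa [Function.comp_def] using ((ContinuousLinearMap.snd ℝ ℝ ℝ).hasFDerivAt.comp p.2
      (hX.hasFDerivAt.comp p.2 (hasFDerivAt_prodMk_right p.1 p.2))).hasDerivAt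
  rw [LinearMap.trace_prod_eq, h₁.deriv, h₂.deriv, ContinuousLinearMap.coe_coe]

namespace ContinuousLinearMap

lemma det_id_add_smul (A : (ℝ × ℝ) →L[ℝ] ℝ × ℝ) (u : ℝ) :
    (ContinuousLinearMap.id ℝ (ℝ × ℝ) + u • A).det
      = 1 + u * LinearMap.trace ℝ (ℝ × ℝ) A + u ^ 2 * A.det := by
  simp only [det, LinearMap.det_prod_eq, LinearMap.trace_prod_eq, coe_coe, add_apply, id_apply,
    smul_apply, Prod.fst_add, Prod.snd_add, Prod.smul_fst, Prod.smul_snd, smul_eq_mul]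
  ring

lemma abs_det_le (A : (ℝ × ℝ) →L[ℝ] ℝ × ℝ) : |A.det| ≤ 2 * ‖A‖ ^ 2 := by
  have hcoord : ∀ v : ℝ × ℝ, ‖v‖ ≤ 1 → |(A v).1| ≤ ‖A‖ ∧ |(A v).2| ≤ ‖A‖ := fun v hv => by
    have h : ‖A v‖ ≤ ‖A‖ := A.le_of_opNorm_le_of_le le_rfl hv |>.trans_eq (mul_one _)
    exact ⟨(_root_.norm_fst_le (A v)).trans h, (_root_.norm_snd_le (A v)).trans h⟩
  obtain ⟨ha, hc⟩ := hcoord (1, 0) (by simp [Prod.norm_def])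
  obtain ⟨hb, hd⟩ := hcoord (0, 1) (by simp [Prod.norm_def])
  rw [det, LinearMap.det_prod_eq, coe_coe]
  calc _ ≤ |(A (1, 0)).1| * |(A (0, 1)).2| + |(A (0, 1)).1| * |(A (1, 0)).2| := by
        rw [← abs_mul, ← abs_mul]; exact abs_sub _ _
    _ ≤ ‖A‖ * ‖A‖ + ‖A‖ * ‖A‖ := by gcongr
    _ = 2 * ‖A‖ ^ 2 := by ring

lemma one_le_mul_abs_det_id_add_smul {A : (ℝ × ℝ) →L[ℝ] ℝ × ℝ} {K u : ℝ}
    (htr : LinearMap.trace ℝ (ℝ × ℝ) A = 0) (hA : ‖A‖ ≤ K) (huK : |u| * K ≤ 1 / 2) :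
    1 ≤ (1 + 4 * K ^ 2 * u ^ 2) * |(ContinuousLinearMap.id ℝ (ℝ × ℝ) + u • A).det| := by
  have hdet : -(2 * K ^ 2 * u ^ 2) ≤ u ^ 2 * A.det := by
    have : |A.det| ≤ 2 * K ^ 2 := A.abs_det_le.trans (by gcongr)
    nlinarith [neg_abs_le A.det, sq_nonneg u]
  have hsmall : 2 * K ^ 2 * u ^ 2 ≤ 1 / 2 := by
    nlinarith [mul_nonneg (abs_nonneg u) ((norm_nonneg A).trans hA), sq_abs u]
  have hnonneg : 0 ≤ 2 * K ^ 2 * u ^ 2 := by positivity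
  rw [A.det_id_add_smul, htr, mul_zero, add_zero]
  calc 1 ≤ (1 + 4 * K ^ 2 * u ^ 2) * (1 - 2 * K ^ 2 * u ^ 2) := by nlinarith
    _ ≤ (1 + 4 * K ^ 2 * u ^ 2) * |1 + u ^ 2 * A.det| := by
        gcongr
        linarith [le_abs_self (1 + u ^ 2 * A.det)]

end ContinuousLinearMap

lemma LipschitzWith.injective_add_smul {E : Type*} [NormedAddCommGroup E] [NormedSpace ℝ E]
    {X : E → E} {K : ℝ≥0} (hK : LipschitzWith K X) {u : ℝ} (hu : 0 ≤ u) (huK : u * K < 1) :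
    Function.Injective fun q => q + u • X q := by
  refine (AntilipschitzWith.id.add_lipschitzWith ((lipschitzWith_smul u).comp hK) ?_).injective
  rw [inv_one, ← NNReal.coe_lt_coe]
  simpa [abs_of_nonneg hu] using huK

lemma lintegral_comp_add_smul_le {X : ℝ × ℝ → ℝ × ℝ} {K : ℝ≥0} (hX : Differentiable ℝ X)
    (hK : LipschitzWith K X) (hdiv : IsDivergenceFree X) {u : ℝ} (hu : 0 ≤ u)
    (huK : u * K ≤ 1 / 2) (g : ℝ × ℝ → ℝ≥0∞) :
    ∫⁻ q, g (q + u • X q) ≤ ENNReal.ofReal (1 + 4 * K ^ 2 * u ^ 2) * ∫⁻ q, g q := by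
  set J : ℝ × ℝ → (ℝ × ℝ) →L[ℝ] ℝ × ℝ := fun q => ContinuousLinearMap.id ℝ _ + u • fderiv ℝ X q
  have hJ : ∀ q ∈ univ, HasFDerivWithinAt (fun q => q + u • X q) (J q) univ q := fun q _ =>
    ((hasFDerivAt_id q).add ((hX q).hasFDerivAt.const_smul u)).hasFDerivWithinAt
  have hdet : ∀ q, 1 ≤ ENNReal.ofReal (1 + 4 * K ^ 2 * u ^ 2) * ENNReal.ofReal |(J q).det| :=
    fun q => by
      rw [← ENNReal.ofReal_mul (by positivity), ← ENNReal.ofReal_one]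
      exact ENNReal.ofReal_le_ofReal <| ContinuousLinearMap.one_le_mul_abs_det_id_add_smul
        (hdiv q) (norm_fderiv_le_of_lipschitz ℝ hK) (by rwa [abs_of_nonneg hu])
  have hinj := (hK.injective_add_smul hu (by linarith)).injOn (s := univ)
  calc ∫⁻ q, g (q + u • X q)
      ≤ ∫⁻ q, ENNReal.ofReal (1 + 4 * K ^ 2 * u ^ 2)
          * (ENNReal.ofReal |(J q).det| * g (q + u • X q)) :=
        lintegral_mono fun q => by rw [← mul_assoc]; exact le_mul_of_one_le_left' (hdet q)
    _ = ENNReal.ofReal (1 + 4 * K ^ 2 * u ^ 2) * ∫⁻ p in (fun q => q + u • X q) '' univ, g p := by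
        rw [lintegral_const_mul' _ _ ENNReal.ofReal_ne_top,
          lintegral_image_eq_lintegral_abs_det_fderiv_mul volume MeasurableSet.univ hJ hinj,
          Measure.restrict_univ]
    _ ≤ ENNReal.ofReal (1 + 4 * K ^ 2 * u ^ 2) * ∫⁻ q, g q := by
        gcongr; exact Measure.restrict_le_self

lemma ENNReal.apply_le_apply_zero_add_of_le_add_sq {F : ℝ → ℝ≥0∞} {t δ : ℝ} {C : ℝ≥0∞}
    (ht : 0 ≤ t) (hF : ∀ s u, 0 ≤ s → 0 ≤ u → u ≤ δ → s + u ≤ t →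
      F (s + u) ≤ F s + ENNReal.ofReal (u ^ 2) * C)
    {n : ℕ} (hn : 0 < n) (hnδ : t / n ≤ δ) :
    F t ≤ F 0 + ENNReal.ofReal (t ^ 2 / n) * C := by
  have hn' : (0 : ℝ) < n := by exact_mod_cast hn
  have hstep : 0 ≤ t / n := by positivity
  have hk : ∀ k : ℕ, k ≤ n → F (k * (t / n)) ≤ F 0 + k * (ENNReal.ofReal ((t / n) ^ 2) * C) := by
    intro k
    induction k with
    | zero => simp
    | succ k ih =>
      intro hkn
      have hkt : (k + 1 : ℝ) * (t / n) ≤ t := by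
        rw [mul_div_assoc', div_le_iff₀ hn']
        nlinarith [(by exact_mod_cast hkn : (k : ℝ) + 1 ≤ n)]
      calc F ((k + 1 : ℕ) * (t / n)) = F (k * (t / n) + t / n) := by push_cast; ring_nf
        _ ≤ F (k * (t / n)) + ENNReal.ofReal ((t / n) ^ 2) * C :=
          hF _ _ (by positivity) hstep hnδ (by linarith)
        _ ≤ F 0 + k * (ENNReal.ofReal ((t / n) ^ 2) * C) + ENNReal.ofReal ((t / n) ^ 2) * C := by
          gcongr; exact ih (by omega)
        _ = F 0 + (k + 1 : ℕ) * (ENNReal.ofReal ((t / n) ^ 2) * C) := by push_cast; ring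
  have hsum : (n : ℝ) * (t / n) ^ 2 = t ^ 2 / n := by field_simp
  simpa only [mul_div_cancel₀ t hn'.ne', ← mul_assoc, ← ENNReal.ofReal_natCast,
    ← ENNReal.ofReal_mul hn'.le, hsum] using hk n le_rfl

lemma ENNReal.apply_le_apply_zero_of_le_add_sq {F : ℝ → ℝ≥0∞} {t δ : ℝ} {C : ℝ≥0∞}
    (ht : 0 ≤ t) (hδ : 0 < δ) (hC : C ≠ ∞) (hF : ∀ s u, 0 ≤ s → 0 ≤ u → u ≤ δ → s + u ≤ t →
      F (s + u) ≤ F s + ENNReal.ofReal (u ^ 2) * C) :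
    F t ≤ F 0 := by
  have hlim : Tendsto (fun n : ℕ => F 0 + ENNReal.ofReal (t ^ 2 / n) * C) atTop (𝓝 (F 0)) := by
    have h0 : Tendsto (fun n : ℕ => ENNReal.ofReal (t ^ 2 / n)) atTop (𝓝 0) := by
      simpa using ENNReal.tendsto_ofReal (tendsto_const_div_atTop_nhds_zero_nat (t ^ 2))
    simpa using tendsto_const_nhds.add (ENNReal.Tendsto.mul_const h0 (Or.inr hC))
  refine ge_of_tendsto hlim (eventually_atTop.2 ⟨⌈t / δ⌉₊ + 1, fun n hn =>
    apply_le_apply_zero_add_of_le_add_sq ht hF (by omega) ?_⟩)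
  have hn' : t / δ < n := (Nat.le_ceil _).trans_lt (by exact_mod_cast hn)
  rw [div_le_iff₀ (by linarith [div_nonneg ht hδ.le])]
  rw [div_lt_iff₀ hδ] at hn'
  linarith

lemma MeasureTheory.lintegral_le_mul_measure {α : Type*} [MeasurableSpace α] {μ : Measure α}
    {f : α → ℝ≥0∞} {c : ℝ≥0∞} {s : Set α} (hf : ∀ a, f a ≤ c) (hfs : ∀ a ∉ s, f a = 0) :
    ∫⁻ a, f a ∂μ ≤ c * μ s := by
  refine (lintegral_mono fun a => ?_).trans (lintegral_indicator_const_le s c)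
  by_cases ha : a ∈ s
  · simpa [ha] using hf a
  · simp [ha, hfs a ha]

lemma MeasureTheory.Measure.le_of_forall_lintegral_le {α : Type*} [MetricSpace α]
    [ProperSpace α] [MeasurableSpace α] [BorelSpace α] {μ ν : Measure α} [μ.InnerRegular]
    [IsFiniteMeasureOnCompacts ν]
    (h : ∀ (f : α → ℝ≥0) (L : ℝ≥0), LipschitzWith L f → HasCompactSupport f →
      ∫⁻ x, f x ∂μ ≤ ∫⁻ x, f x ∂ν) :
    μ ≤ ν := by
  have hcompact : ∀ K, IsCompact K → μ K ≤ ν K := fun K hK => by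
    refine ge_of_tendsto ((tendsto_measure_cthickening_of_isCompact hK).mono_left
      (nhdsWithin_le_nhds (s := Ioi 0))) (eventually_nhdsWithin_of_forall fun δ hδ => ?_)
    rw [mem_Ioi] at hδ
    have hzero : ∀ x ∉ cthickening δ K, thickenedIndicator hδ K x = 0 := fun x hx =>
      thickenedIndicator_zero hδ K fun h => hx (thickening_subset_cthickening δ K h)
    calc μ K ≤ ∫⁻ x, (thickenedIndicator hδ K x : ℝ≥0∞) ∂μ :=
          measure_le_lintegral_thickenedIndicator μ hK.measurableSet hδ
      _ ≤ ∫⁻ x, (thickenedIndicator hδ K x : ℝ≥0∞) ∂ν :=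
          h _ _ (lipschitzWith_thickenedIndicator hδ K) <|
            HasCompactSupport.intro hK.cthickening hzero
      _ ≤ 1 * ν (cthickening δ K) := lintegral_le_mul_measure
          (fun x => by simpa using thickenedIndicator_le_one hδ K x)
          (fun x hx => by simp [hzero x hx])
      _ = ν (cthickening δ K) := one_mul _
  refine Measure.le_iff.2 fun A hA => ?_
  rw [hA.measure_eq_iSup_isCompact μ]
  exact iSup₂_le fun K hKA => iSup_le fun hK => (hcompact K hK).trans (measure_mono hKA)

namespace IsFlow

variable {X : ℝ × ℝ → ℝ × ℝ} {φ : ℝ → ℝ × ℝ → ℝ × ℝ} {K L : ℝ≥0} {M u : ℝ}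
  {g : ℝ × ℝ → ℝ≥0} {S : Set (ℝ × ℝ)}

lemma lintegral_comp_le_add (hφ : IsFlow X φ) (hX : Differentiable ℝ X) (hK : LipschitzWith K X)
    (hM : ∀ p, ‖X p‖ ≤ M) (hdiv : IsDivergenceFree X) (hu : 0 ≤ u) (hu1 : u ≤ 1)
    (huK : u * K ≤ 1 / 2) (hg : LipschitzWith L g) (hgS : ∀ p ∉ S, g p = 0) :
    ∫⁻ q, g (φ u q) ≤ ENNReal.ofReal (1 + 4 * K ^ 2 * u ^ 2) * (∫⁻ q, g q)
      + ENNReal.ofReal (L * K * M * u ^ 2) * volume (cthickening M S) := by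
  have hM0 : 0 ≤ M := (norm_nonneg _).trans (hM 0)
  have hpt : ∀ q, (g (φ u q) : ℝ≥0∞) ≤ g (q + u • X q)
      + (cthickening M S).indicator (fun _ => ENNReal.ofReal (L * K * M * u ^ 2)) q := by
    intro q
    by_cases hq : q ∈ cthickening M S
    · rw [indicator_of_mem hq, ← ENNReal.ofReal_coe_nnreal, ← ENNReal.ofReal_coe_nnreal]
      refine (ENNReal.ofReal_le_ofReal ?_).trans ENNReal.ofReal_add_le
      have hgq := hg.dist_le_mul (φ u q) (q + u • X q)
      have hφq := hφ.norm_sub_add_smul_le hK hM hu q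
      rw [NNReal.dist_eq, dist_eq_norm] at hgq
      nlinarith [le_abs_self ((g (φ u q) : ℝ) - g (q + u • X q)), L.coe_nonneg]
    · have hout : φ u q ∉ S := fun h => hq <| hφ.mem_cthickening_of_apply_mem hM
        (by rw [abs_of_nonneg hu]; nlinarith) h
      simp [hgS _ hout]
  calc ∫⁻ q, (g (φ u q) : ℝ≥0∞)
      ≤ ∫⁻ q, ((g (q + u • X q) : ℝ≥0∞)
          + (cthickening M S).indicator (fun _ => ENNReal.ofReal (L * K * M * u ^ 2)) q) :=
        lintegral_mono hpt
    _ = (∫⁻ q, (g (q + u • X q) : ℝ≥0∞))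
          + ENNReal.ofReal (L * K * M * u ^ 2) * volume (cthickening M S) := by
        rw [lintegral_add_right _ (measurable_const.indicator isClosed_cthickening.measurableSet),
          lintegral_indicator_const isClosed_cthickening.measurableSet]
    _ ≤ _ := by gcongr; exact lintegral_comp_add_smul_le hX hK hdiv hu huK _

lemma lintegral_comp_le_add_sq (hφ : IsFlow X φ) (hX : Differentiable ℝ X)
    (hK : LipschitzWith K X) (hM : ∀ p, ‖X p‖ ≤ M) (hdiv : IsDivergenceFree X) (hu : 0 ≤ u)
    (hu1 : u ≤ 1) (huK : u * K ≤ 1 / 2) (hg : LipschitzWith L g) {B : ℝ≥0∞}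
    (hgB : ∀ p, (g p : ℝ≥0∞) ≤ B) (hgS : ∀ p ∉ S, g p = 0) :
    ∫⁻ q, g (φ u q) ≤ (∫⁻ q, g q) + ENNReal.ofReal (u ^ 2)
      * (ENNReal.ofReal (4 * K ^ 2) * (B * volume S)
        + ENNReal.ofReal (L * K * M) * volume (cthickening M S)) := by
  have hgint : ∫⁻ q, (g q : ℝ≥0∞) ≤ B * volume S :=
    lintegral_le_mul_measure hgB fun p hp => by simp [hgS p hp]
  have hsplit : ENNReal.ofReal (1 + 4 * K ^ 2 * u ^ 2)
      = 1 + ENNReal.ofReal (u ^ 2) * ENNReal.ofReal (4 * K ^ 2) := by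
    rw [ENNReal.ofReal_add zero_le_one (by positivity), ENNReal.ofReal_one,
      ← ENNReal.ofReal_mul (sq_nonneg u)]
    ring_nf
  have hfactor : ENNReal.ofReal (L * K * M * u ^ 2)
      = ENNReal.ofReal (u ^ 2) * ENNReal.ofReal (L * K * M) := by
    rw [← ENNReal.ofReal_mul (sq_nonneg u)]; ring_nf
  calc _ ≤ _ := hφ.lintegral_comp_le_add hX hK hM hdiv hu hu1 huK hg hgS
    _ = (∫⁻ q, (g q : ℝ≥0∞)) + ENNReal.ofReal (u ^ 2) * (ENNReal.ofReal (4 * K ^ 2)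
          * (∫⁻ q, (g q : ℝ≥0∞)) + ENNReal.ofReal (L * K * M) * volume (cthickening M S)) := by
        rw [hsplit, hfactor]; ring
    _ ≤ _ := by gcongr

lemma lintegral_comp_le_of_nonneg (hφ : IsFlow X φ) (hX : ContDiff ℝ 1 X)
    (hc : HasCompactSupport X) (hdiv : IsDivergenceFree X) {t : ℝ} (ht : 0 ≤ t)
    {f : ℝ × ℝ → ℝ≥0} (hf : LipschitzWith L f) (hfc : HasCompactSupport f) :
    ∫⁻ q, (f (φ t q) : ℝ≥0∞) ≤ ∫⁻ q, (f q : ℝ≥0∞) := by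
  obtain ⟨K, hK⟩ := ContDiff.lipschitzWith_of_hasCompactSupport hc hX one_ne_zero
  obtain ⟨M, hM⟩ := hc.exists_bound_of_continuous hX.continuous
  obtain ⟨B, hB⟩ := (hfc.comp_left NNReal.coe_zero).exists_bound_of_continuous
    (NNReal.continuous_coe.comp hf.continuous)
  have hM0 : 0 ≤ M := (norm_nonneg _).trans (hM 0)
  set S := cthickening (M * t) (tsupport f)
  have hS : IsCompact S := hfc.cthickening
  -- For `0 ≤ s ≤ t`, the functions `f ∘ φ s` share a Lipschitz constant, a bound and a support.
  have hsupp : ∀ s ∈ Icc 0 t, ∀ p ∉ S, f (φ s p) = 0 := fun s hs p hp =>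
    image_eq_zero_of_notMem_tsupport fun h => hp <| hφ.mem_cthickening_of_apply_mem hM
      (mul_le_mul_of_nonneg_left (abs_le.2 ⟨by linarith [hs.1], hs.2⟩) hM0) h
  have hbound : ∀ p, (f p : ℝ≥0∞) ≤ ENNReal.ofReal B := fun p => by
    rw [← ENNReal.ofReal_coe_nnreal]
    exact ENNReal.ofReal_le_ofReal ((le_abs_self _).trans (hB p))
  have hSfin : volume S ≠ ∞ := hS.measure_lt_top.ne
  have hS'fin : volume (cthickening M S) ≠ ∞ := (hS.cthickening (r := M)).measure_lt_top.ne
  refine (ENNReal.apply_le_apply_zero_of_le_add_sq (F := fun s => ∫⁻ q, (f (φ s q) : ℝ≥0∞)) ht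
    (δ := 1 / (2 * K + 2)) (C := ENNReal.ofReal (4 * K ^ 2) * (ENNReal.ofReal B * volume S)
      + ENNReal.ofReal (L * Real.toNNReal (exp (K * t)) * K * M) * volume (cthickening M S))
    (by positivity) (by finiteness) fun s u hs hu huδ hsu => ?_).trans_eq (by simp [hφ.zero])
  have hu' : u * (2 * K + 2) ≤ 1 := by rwa [le_div_iff₀ (by positivity)] at huδ
  simp_rw [hφ.add hK s u]
  exact hφ.lintegral_comp_le_add_sq (g := fun p => f (φ s p)) (hX.differentiable one_ne_zero) hK
    hM hdiv hu (by nlinarith [K.coe_nonneg]) (by nlinarith)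
    (hf.comp (hφ.lipschitzWith (T := t) hK hs (by linarith))) (fun p => hbound _)
    (hsupp s ⟨hs, by linarith⟩)

lemma map_le_volume_of_nonneg (hφ : IsFlow X φ) (hX : ContDiff ℝ 1 X)
    (hc : HasCompactSupport X) (hdiv : IsDivergenceFree X) {t : ℝ} (ht : 0 ≤ t) :
    Measure.map (φ t) volume ≤ volume := by
  obtain ⟨K, hK⟩ := ContDiff.lipschitzWith_of_hasCompactSupport hc hX one_ne_zero
  have hcont := hφ.continuous hK t
  have := Measure.InnerRegular.map_of_continuous (μ := volume) hcont
  refine Measure.le_of_forall_lintegral_le fun f L hf hfc => ?_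
  rw [lintegral_map hf.continuous.measurable.coe_nnreal_ennreal hcont.measurable]
  exact hφ.lintegral_comp_le_of_nonneg hX hc hdiv ht hf hfc

lemma map_le_volume (hφ : IsFlow X φ) (hX : ContDiff ℝ 1 X) (hc : HasCompactSupport X)
    (hdiv : IsDivergenceFree X) (t : ℝ) : Measure.map (φ t) volume ≤ volume := by
  rcases le_total 0 t with ht | ht
  · exact hφ.map_le_volume_of_nonneg hX hc hdiv ht
  · simpa using hφ.neg.map_le_volume_of_nonneg hX.neg hc.neg hdiv.neg (neg_nonneg.2 ht)

end IsFlow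

/-- A flow of a C¹ compactly supported divergence-free vector field on ℝ²
preserves two-dimensional Lebesgue measure at every time t. -/
theorem stmt_3 (X : ℝ × ℝ → ℝ × ℝ) (hX : ContDiff ℝ 1 X) (hc : HasCompactSupport X)
    (hdiv : ∀ p : ℝ × ℝ,
      deriv (fun y : ℝ => (X (y, p.2)).1) p.1
        + deriv (fun z : ℝ => (X (p.1, z)).2) p.2 = 0)
    (φ : ℝ → ℝ × ℝ → ℝ × ℝ)
    (hφ0 : ∀ q : ℝ × ℝ, φ 0 q = q)
    (hφ : ∀ (t : ℝ) (q : ℝ × ℝ), HasDerivAt (fun s => φ s q) (X (φ t q)) t) :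
    ∀ t : ℝ, MeasurePreserving (φ t) volume volume := by
  intro t
  have hflow : IsFlow X φ := ⟨hφ0, hφ⟩
  have hdiv' : IsDivergenceFree X := fun q =>
    ((hX.differentiable one_ne_zero q).trace_fderiv_eq).trans (hdiv q)
  obtain ⟨K, hK⟩ := ContDiff.lipschitzWith_of_hasCompactSupport hc hX one_ne_zero
  have hmeas : ∀ s, Measurable (φ s) := fun s => (hflow.continuous hK s).measurable
  have hinv : φ t ∘ φ (-t) = id := funext fun q => by simp [← hflow.add hK, hflow.zero]
  refine ⟨hmeas t, le_antisymm (hflow.map_le_volume hX hc hdiv' t) ?_⟩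
  calc volume = Measure.map (φ t) (Measure.map (φ (-t)) volume) := by
        rw [Measure.map_map (hmeas t) (hmeas (-t)), hinv, Measure.map_id]
    _ ≤ Measure.map (φ t) volume :=
        Measure.map_mono (hflow.map_le_volume hX hc hdiv' (-t)) (hmeas t)
end

section
/- Let M be a set, f₀ : M → M a bijection, n ≥ 1 an integer, and p ∈ M a periodic point with f₀ⁿ(p) = p. Let B ⊆ M with p ∈ B such that the sets f₀^i(B), for 0 ≤ i ≤ n−1, are pairwise disjoint. Let f_n : M → M be a map that coincides with f₀ⁿ on the complement of B. Define h = f_n ∘ f₀^{−n} and f = h ∘ f₀. Then f^j(p) = f₀^j(p) for every 0 ≤ j ≤ n−1, and fⁿ(p) = f_n(p). -/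
/-- Let f₀ be a bijection of a set M, p a periodic point of period dividing
n ≥ 1, and B ∋ p a set whose images f₀^i(B), 0 ≤ i ≤ n−1, are pairwise disjoint. If
f_n coincides with f₀ⁿ on the complement of B, h = f_n ∘ f₀^{−n} and f = h ∘ f₀, then
f^j(p) = f₀^j(p) for 0 ≤ j ≤ n−1 and fⁿ(p) = f_n(p). -/
theorem stmt_12 (M : Type*) (f₀ : M ≃ M) (n : ℕ) (hn : 1 ≤ n) (p : M)
    (hp : (⇑f₀)^[n] p = p) (B : Set M) (hpB : p ∈ B)
    (hdisj : ∀ i j : ℕ, i < n → j < n → i ≠ j →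
      Disjoint ((⇑f₀)^[i] '' B) ((⇑f₀)^[j] '' B))
    (fn : M → M) (hfn : ∀ x ∉ B, fn x = (⇑f₀)^[n] x) :
    (∀ j < n, ((fn ∘ (⇑f₀.symm)^[n]) ∘ ⇑f₀)^[j] p = (⇑f₀)^[j] p) ∧
      ((fn ∘ (⇑f₀.symm)^[n]) ∘ ⇑f₀)^[n] p = fn p := by
  have hinv : ∀ y : M, (⇑f₀.symm)^[n] ((⇑f₀)^[n] y) = y :=
    fun y => (f₀.left_inv.iterate n) y
  -- f₀^[n] (f₀^[k] p) = f₀^[k] p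
  have hper : ∀ k : ℕ, (⇑f₀)^[n] ((⇑f₀)^[k] p) = (⇑f₀)^[k] p := by
    intro k
    rw [← Function.iterate_add_apply, Nat.add_comm, Function.iterate_add_apply, hp]
  have hsymm : ∀ k : ℕ, (⇑f₀.symm)^[n] ((⇑f₀)^[k] p) = (⇑f₀)^[k] p := by
    intro k
    conv_lhs => rw [← hper k, hinv]
  have hnotB : ∀ k : ℕ, 0 < k → k < n → (⇑f₀)^[k] p ∉ B := by
    intro k hk0 hkn hmem
    exact (hdisj k 0 hkn hn (by omega)).le_bot ⟨⟨p, hpB, rfl⟩, by simpa using hmem⟩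
  have key : ∀ j : ℕ, j < n → ((fn ∘ (⇑f₀.symm)^[n]) ∘ ⇑f₀)^[j] p = (⇑f₀)^[j] p := by
    intro j
    induction j with
    | zero => intro _; rfl
    | succ j ih =>
      intro hj
      rw [Function.iterate_succ_apply', ih (by omega), Function.comp_apply,
        Function.comp_apply,
        show f₀ ((⇑f₀)^[j] p) = (⇑f₀)^[j+1] p from (Function.iterate_succ_apply' _ _ _).symm,
        hsymm (j + 1),
        hfn _ (hnotB (j + 1) (by omega) hj), hper]
  refine ⟨key, ?_⟩
  obtain ⟨m, rfl⟩ : ∃ m, n = m + 1 := ⟨n - 1, by omega⟩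
  rw [Function.iterate_succ_apply', key m (by omega), Function.comp_apply,
    Function.comp_apply,
    show f₀ ((⇑f₀)^[m] p) = (⇑f₀)^[m+1] p from (Function.iterate_succ_apply' _ _ _).symm,
    hp, ← hp, hinv, hp]
end
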